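/- Let K be a field and q ∈ K with q ≠ 0 and {n}_q ≠ 0 for every nonzero integer n. Then the powers {1, D_q, D_q², …} of the operator D_q on L are linearly independent over the polynomial ring in M: if p_0, …, p_m ∈ K[X] are polynomials such that Σ_{j=0}^{m} p_j(M) ∘ D_q^j = 0 as an operator on L, then p_j = 0 for all j. In particular, every element of the K-subalgebra of End_K(L) generated by M and D_q is uniquely expressible as Σ_{j=0}^{m} p_j(M) D_q^j with p_j ∈ K[X]. -/

import Mathlib

noncomputable section

open Classical in
/-- The `q`-integer `{n}_q = (qⁿ − 1)/(q − 1)` for `q ≠ 1`, and `{n}_q = n·1_K` for `q = 1`. -/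
def qInt (K : Type*) [Field K] (q : K) (n : ℤ) : K :=
  if q = 1 then (n : K) else (q ^ n - 1) / (q - 1)

/-- The defining relation `AB = q·BA + 1` of the `q`-deformed Heisenberg algebra,
imposed on the free algebra on two generators. -/
inductive qHeisRel (K : Type*) [Field K] (q : K) :
    FreeAlgebra K (Fin 2) → FreeAlgebra K (Fin 2) → Prop
  | rel : qHeisRel K q (FreeAlgebra.ι K 0 * FreeAlgebra.ι K 1)
      (q • (FreeAlgebra.ι K 1 * FreeAlgebra.ι K 0) + 1)

/-- The `q`-deformed Heisenberg algebra `H_q = K⟨A,B⟩/⟨AB − qBA − 1⟩`. -/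
abbrev qHeis (K : Type*) [Field K] (q : K) : Type _ := RingQuot (qHeisRel K q)

/-- The generator `A` of `H_q`. -/
def qA (K : Type*) [Field K] (q : K) : qHeis K q :=
  RingQuot.mkAlgHom K (qHeisRel K q) (FreeAlgebra.ι K 0)

/-- The generator `B` of `H_q`. -/
def qB (K : Type*) [Field K] (q : K) : qHeis K q :=
  RingQuot.mkAlgHom K (qHeisRel K q) (FreeAlgebra.ι K 1)
/-- Multiplication by `t` on the space `L` of formal Laurent series `Σ aₙ tⁿ`,
realized as the space of functions `ℤ → K`: `(M f)(n) = f(n−1)`. -/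
def Mop (K : Type*) [Field K] : Module.End K (ℤ → K) where
  toFun f := fun n => f (n - 1)
  map_add' _ _ := rfl
  map_smul' _ _ := rfl

/-- The `q`-difference operator `D_q` on Laurent series: `(D_q f)(n) = {n+1}_q · f(n+1)`. -/
def Dq (K : Type*) [Field K] (q : K) : Module.End K (ℤ → K) where
  toFun f := fun n => qInt K q (n + 1) * f (n + 1)
  map_add' f g := by funext n; simp [mul_add]
  map_smul' c f := by funext n; simp [Pi.smul_apply, smul_eq_mul]; ring

/-! Linear independence: applying `Σ pᵢ(M) D_qⁱ` to the basis vector `tʲ`, every `D_qⁱ` with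
`i > j` kills it (the factor `{0}_q = 0` appears), while `D_qʲ` sends it to `[j]_q! · t⁰` with
`[j]_q! ≠ 0`; if the `pᵢ` with `i < j` already vanish, this leaves `pⱼ(M) t⁰ = 0`, so `pⱼ = 0`.

Normal form: the relation `D_q M = q M D_q + 1` moves `D_q` to the right past any `p(M)`, so the
normally ordered elements `Σ pⱼ(M) D_qʲ` form a subspace containing `1` and stable under left
multiplication by `M` and `D_q`; it therefore contains the algebra generated by `M` and `D_q`. -/

open Polynomial

section NormalForm

variable {A : Type*} [Ring A]

def normalForm (R : Type*) [CommRing R] [Algebra R A] (a d : A) : (ℕ →₀ R[X]) →ₗ[R] A :=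
  Finsupp.lsum R fun j => LinearMap.mulRight R (d ^ j) ∘ₗ (aeval a).toLinearMap

variable {R : Type*} [CommRing R] [Algebra R A] {a d : A}

lemma normalForm_single (j : ℕ) (r : R[X]) :
    normalForm R a d (Finsupp.single j r) = aeval a r * d ^ j := by
  simp [normalForm]

lemma aeval_mul_pow_mem_range_normalForm (r : R[X]) (j : ℕ) :
    aeval a r * d ^ j ∈ LinearMap.range (normalForm R a d) :=
  ⟨_, normalForm_single j r⟩

lemma aeval_mem_range_normalForm (r : R[X]) :
    aeval a r ∈ LinearMap.range (normalForm R a d) := by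
  simpa only [pow_zero, mul_one] using aeval_mul_pow_mem_range_normalForm (d := d) r 0

lemma exists_eq_sum_of_mem_range_normalForm {x : A}
    (hx : x ∈ LinearMap.range (normalForm R a d)) :
    ∃ (m : ℕ) (p : ℕ → R[X]), x = ∑ j ∈ Finset.range (m + 1), aeval a (p j) * d ^ j := by
  obtain ⟨p, rfl⟩ := hx
  refine ⟨p.support.sup id, p, ?_⟩
  rw [normalForm, Finsupp.lsum_apply]
  refine Finsupp.sum_of_support_subset _ (fun j hj => ?_) _ (fun j _ => by simp)
  exact Finset.mem_range_succ_iff.2 (Finset.le_sup (f := id) hj)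

lemma map_mem_range_normalForm (f : A →ₗ[R] A)
    (hf : ∀ (r : R[X]) (j : ℕ), f (aeval a r * d ^ j) ∈ LinearMap.range (normalForm R a d))
    {y : A} (hy : y ∈ LinearMap.range (normalForm R a d)) :
    f y ∈ LinearMap.range (normalForm R a d) := by
  obtain ⟨p, rfl⟩ := hy
  induction p using Finsupp.induction_linear with
  | zero => simp
  | add p p' hp hp' => simpa using add_mem hp hp'
  | single j r => simpa [normalForm_single] using hf r j

lemma mul_pow_mem_range_normalForm (k : ℕ) {y : A}
    (hy : y ∈ LinearMap.range (normalForm R a d)) :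
    y * d ^ k ∈ LinearMap.range (normalForm R a d) := by
  refine map_mem_range_normalForm (LinearMap.mulRight R (d ^ k)) (fun r j => ?_) hy
  simpa [mul_assoc, ← pow_add] using aeval_mul_pow_mem_range_normalForm (R := R) r (j + k)

lemma a_mul_mem_range_normalForm {y : A} (hy : y ∈ LinearMap.range (normalForm R a d)) :
    a * y ∈ LinearMap.range (normalForm R a d) := by
  refine map_mem_range_normalForm (LinearMap.mulLeft R a) (fun r j => ?_) hy
  convert aeval_mul_pow_mem_range_normalForm (a := a) (d := d) (X * r) j using 1
  simp [mul_assoc]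

variable {q : R}

lemma d_mul_aeval_mem_range_normalForm (hda : d * a = q • (a * d) + 1) (r : R[X]) :
    d * aeval a r ∈ LinearMap.range (normalForm R a d) := by
  induction r using Polynomial.induction_on with
  | C c =>
    simpa [Algebra.commutes, ← Algebra.smul_def] using
      aeval_mul_pow_mem_range_normalForm (a := a) (d := d) (C c) 1
  | add r s hr hs => simpa [mul_add] using add_mem hr hs
  | monomial n c ih =>
    have key : d * aeval a (C c * X ^ (n + 1)) =
        q • (a * (d * aeval a (C c * X ^ n))) + aeval a (C c * X ^ n) := by
      rw [show C c * X ^ (n + 1) = X * (C c * X ^ n) by ring, map_mul, aeval_X, ← mul_assoc,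
        hda, add_mul, one_mul, smul_mul_assoc, mul_assoc]
    rw [key]
    exact add_mem (Submodule.smul_mem _ q (a_mul_mem_range_normalForm ih))
      (aeval_mem_range_normalForm _)

lemma d_mul_mem_range_normalForm (hda : d * a = q • (a * d) + 1) {y : A}
    (hy : y ∈ LinearMap.range (normalForm R a d)) :
    d * y ∈ LinearMap.range (normalForm R a d) := by
  refine map_mem_range_normalForm (LinearMap.mulLeft R d) (fun r j => ?_) hy
  simpa [mul_assoc] using mul_pow_mem_range_normalForm j (d_mul_aeval_mem_range_normalForm hda r)

lemma mem_range_normalForm_of_mem_adjoin (hda : d * a = q • (a * d) + 1) {x : A}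
    (hx : x ∈ Algebra.adjoin R {a, d}) : x ∈ LinearMap.range (normalForm R a d) := by
  suffices ∀ y ∈ LinearMap.range (normalForm R a d), x * y ∈ LinearMap.range (normalForm R a d) by
    simpa using this 1 (by simpa using aeval_mem_range_normalForm (a := a) (d := d) (1 : R[X]))
  induction hx using Algebra.adjoin_induction with
  | mem x hx =>
    rcases hx with rfl | rfl
    · exact fun _ => a_mul_mem_range_normalForm
    · exact fun _ => d_mul_mem_range_normalForm hda
  | algebraMap c => exact fun y hy => by simpa [← Algebra.smul_def] using Submodule.smul_mem _ c hy
  | add x x' _ _ hx hx' => exact fun y hy => by simpa [add_mul] using add_mem (hx y hy) (hx' y hy)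
  | mul x x' _ _ hx hx' => exact fun y hy => by simpa [mul_assoc] using hx _ (hx' y hy)

end NormalForm

section Operators

variable {K : Type*} [Field K] {q : K}

lemma qInt_zero : qInt K q 0 = 0 := by simp [qInt]

lemma qInt_add_one (hq : q ≠ 0) (n : ℤ) : qInt K q (n + 1) = q * qInt K q n + 1 := by
  unfold qInt
  split_ifs with h
  · subst h; push_cast; ring
  · rw [zpow_add_one₀ hq]
    field_simp [sub_ne_zero.2 h]
    ring

lemma Dq_mul_Mop (hq : q ≠ 0) : Dq K q * Mop K = q • (Mop K * Dq K q) + 1 := by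
  ext f n
  change qInt K q (n + 1) * f (n + 1 - 1) = q * (qInt K q (n - 1 + 1) * f (n - 1 + 1)) + f n
  rw [qInt_add_one hq]
  ring_nf

lemma Mop_pow_apply (k : ℕ) (f : ℤ → K) (n : ℤ) : (Mop K ^ k) f n = f (n - k) := by
  induction k generalizing f n with
  | zero => simp
  | succ k ih =>
    rw [pow_succ, Module.End.mul_apply, ih]
    change f (n - k - 1) = _
    congr 1; push_cast; ring

lemma aeval_Mop_single_apply (p : K[X]) (b : ℤ) (k : ℕ) :
    aeval (Mop K) p (Pi.single b 1) (b + k) = p.coeff k := by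
  induction p using Polynomial.induction_on' with
  | add p r hp hr => simp [hp, hr]
  | monomial n c =>
    rw [← C_mul_X_pow_eq_monomial, map_mul, aeval_C, aeval_X_pow, Algebra.algebraMap_eq_smul_one,
      smul_mul_assoc, one_mul, LinearMap.smul_apply, Pi.smul_apply, Mop_pow_apply,
      coeff_C_mul_X_pow, Pi.single_apply]
    simp [sub_eq_iff_eq_add, eq_comm (a := k)]

lemma eq_zero_of_aeval_Mop_single_eq_zero {p : K[X]} {b : ℤ}
    (h : aeval (Mop K) p (Pi.single b 1) = 0) : p = 0 := by
  ext k
  simpa [aeval_Mop_single_apply] using congr_fun h (b + k)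

lemma Dq_single (a : ℤ) : Dq K q (Pi.single a 1) = qInt K q a • Pi.single (a - 1) 1 := by
  ext n
  change qInt K q (n + 1) * (Pi.single a 1 : ℤ → K) (n + 1) = _
  rcases eq_or_ne n (a - 1) with rfl | hn
  · simp
  · simp [hn, show n + 1 ≠ a by omega]

lemma Dq_pow_single (j : ℕ) (a : ℤ) :
    (Dq K q ^ j) (Pi.single a 1) =
      (∏ i ∈ Finset.range j, qInt K q (a - i)) • Pi.single (a - j) 1 := by
  induction j generalizing a with
  | zero => simp
  | succ j ih =>
    rw [pow_succ, Module.End.mul_apply, Dq_single, map_smul, ih, smul_smul, Finset.prod_range_succ']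
    push_cast
    simp only [sub_sub, add_comm (1 : ℤ), sub_zero, mul_comm]

lemma Dq_pow_single_of_lt {a j : ℕ} (h : a < j) : (Dq K q ^ j) (Pi.single (a : ℤ) 1) = 0 := by
  rw [Dq_pow_single, Finset.prod_eq_zero (Finset.mem_range.2 h) (by simp [qInt_zero]), zero_smul]

theorem eq_zero_of_sum_aeval_Mop_mul_Dq_pow_eq_zero
    (hqInt : ∀ n : ℤ, 0 < n → qInt K q n ≠ 0) (m : ℕ) (p : ℕ → K[X])
    (h : ∑ j ∈ Finset.range (m + 1), aeval (Mop K) (p j) * Dq K q ^ j = 0) :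
    ∀ j ≤ m, p j = 0 := by
  intro j
  induction j using Nat.strong_induction_on with
  | _ j ih =>
    intro hjm
    have hterm : (aeval (Mop K) (p j) * Dq K q ^ j) (Pi.single (j : ℤ) 1) = 0 := by
      have hj := LinearMap.congr_fun h (Pi.single (j : ℤ) 1)
      rwa [LinearMap.sum_apply, LinearMap.zero_apply, Finset.sum_eq_single_of_mem j
        (Finset.mem_range_succ_iff.2 hjm) fun i _ hij => ?_] at hj
      rcases lt_or_gt_of_ne hij with hlt | hgt
      · simp [ih i hlt (hlt.le.trans hjm)]
      · rw [Module.End.mul_apply, Dq_pow_single_of_lt hgt, map_zero]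
    have hprod : ∏ i ∈ Finset.range j, qInt K q ((j : ℤ) - i) ≠ 0 :=
      Finset.prod_ne_zero_iff.2 fun i hi => hqInt _ (by simp at hi; omega)
    rw [Module.End.mul_apply, Dq_pow_single, map_smul, smul_eq_zero] at hterm
    exact eq_zero_of_aeval_Mop_single_eq_zero (hterm.resolve_left hprod)

end Operators

/-- If `q ≠ 0` and `{n}_q ≠ 0` for every nonzero integer `n`, then the powers of `D_q` are
linearly independent over the polynomial ring in `M`: if `Σ_{j=0}^m p_j(M) ∘ D_q^j = 0`
with `p_j ∈ K[X]`, then all `p_j = 0`. In particular, every element of the `K`-subalgebra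
of `End_K(L)` generated by `M` and `D_q` is (uniquely) expressible as `Σ p_j(M) D_q^j`. -/
theorem qHeis_operators_unique_normal_form
    {K : Type*} [Field K] (q : K) (hq : q ≠ 0)
    (hfree : ∀ n : ℤ, n ≠ 0 → qInt K q n ≠ 0) :
    (∀ (m : ℕ) (p : ℕ → Polynomial K),
        (∑ j ∈ Finset.range (m + 1), Polynomial.aeval (Mop K) (p j) * Dq K q ^ j) = 0 →
        ∀ j ≤ m, p j = 0) ∧
    (∀ T ∈ Algebra.adjoin K ({Mop K, Dq K q} : Set (Module.End K (ℤ → K))),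
        ∃ (m : ℕ) (p : ℕ → Polynomial K),
          T = ∑ j ∈ Finset.range (m + 1), Polynomial.aeval (Mop K) (p j) * Dq K q ^ j) :=
  ⟨eq_zero_of_sum_aeval_Mop_mul_Dq_pow_eq_zero fun n hn => hfree n hn.ne',
    fun _ hT => exists_eq_sum_of_mem_range_normalForm
      (mem_range_normalForm_of_mem_adjoin (Dq_mul_Mop hq) hT)⟩
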